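/- Let L be a complete lattice equipped with a compact Hausdorff topology for which both the binary infimum ⊓ : L × L → L and the binary supremum ⊔ : L × L → L are jointly continuous, and such that every point of L has a neighborhood basis of sets closed under ⊓ and a neighborhood basis of sets closed under ⊔ (i.e., L is a hypercontinuous lattice equipped with its Lawson topology). If the underlying topological space of L is homotopy equivalent to a connected CW complex, then L is past contractible: there exists a continuous H : L × [0,1] → L, monotone with respect to the product of the lattice order on L and the reverse of the standard order on [0,1], with H(·,0) = id_L and H(·,1) the constant map at ⊥ (the minimum of L). -/

import Mathlib

open unitInterval

universe u

/-!
A connected CW complex is locally path-connected, hence path-connected, and so is `L`, being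
homotopy equivalent to it. Take a path `q` from `⊤` to `⊥` and its running infimum
`p t = ⨅ s ≤ t, q s`: it is antitone and runs from `⊤` to `⊥`, so `H (x, t) = x ⊓ p t` is the
required homotopy once `p` is continuous. From the left this follows from compactness and the
closedness of the order alone. From the right, `p t' = p t ⊓ ⨅ s ∈ [t, t'], q s`, and the second
factor tends to `q t ≥ p t` because, by compactness, the infimum of a set stays in every closed
inf-closed set containing it, and such sets form neighbourhood bases.
-/

open Set Filter Topology CategoryTheory CategoryTheory.Limits

theorem LocallyPathConnectedSpace.iSup_coinduced {Y ι : Type*} {X : ι → Type*}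
    [∀ i, TopologicalSpace (X i)] [∀ i, LocallyPathConnectedSpace (X i)] (f : ∀ i, X i → Y) :
    @LocallyPathConnectedSpace Y (⨆ i, .coinduced (f i) inferInstance) := by
  have hsigma : (⨆ i, TopologicalSpace.coinduced (f i) inferInstance) =
      TopologicalSpace.coinduced (fun p : Σ i, X i => f p.1 p.2) inferInstance := by
    simp only [instTopologicalSpaceSigma, coinduced_iSup, coinduced_compose]
    rfl
  rw [hsigma]
  exact LocallyPathConnectedSpace.coinduced _

theorem TopCat.locallyPathConnectedSpace_of_isColimit {J : Type*} [Category J]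
    {F : J ⥤ TopCat.{u}} {c : Cocone F} (hc : IsColimit c)
    (hF : ∀ j, ∃ j', Nonempty (j ⟶ j') ∧ LocallyPathConnectedSpace (F.obj j')) :
    LocallyPathConnectedSpace c.pt := by
  choose j' φ _ using hF
  have htop : c.pt.str = ⨆ j, (F.obj (j' j)).str.coinduced (c.ι.app (j' j)) := by
    refine (TopCat.coinduced_of_isColimit c hc).trans (le_antisymm (iSup_mono fun j => ?_)
      (iSup_le fun j => le_iSup_of_le (j' j) le_rfl))
    rw [← c.w (φ j).some, TopCat.coe_comp, ← coinduced_compose]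
    exact coinduced_mono (F.map _).hom.continuous.coinduced_le
  exact htop ▸ LocallyPathConnectedSpace.iSup_coinduced _

theorem TopCat.locallyPathConnectedSpace_disk (n : ℕ) :
    LocallyPathConnectedSpace (TopCat.disk.{u} n) :=
  have := (convex_closedBall (0 : EuclideanSpace ℝ (Fin n)) 1).locallyPathConnectedSpace
  Homeomorph.ulift.symm.isQuotientMap.locallyPathConnectedSpace

theorem TopCat.CWComplex.locallyPathConnectedSpace {X : TopCat.{u}} (K : X.CWComplex) :
    LocallyPathConnectedSpace X := by
  have hsk : ∀ n, LocallyPathConnectedSpace (K.F.obj n) := by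
    intro n
    induction n with
    | zero =>
      have : IsEmpty (K.F.obj 0) :=
        ⟨fun x => PEmpty.elim ((K.isoBot.hom ≫ initial.to (TopCat.of PEmpty)) x)⟩
      infer_instance
    | succ n ih =>
      let c := K.attachCells n (not_isMax n)
      have : LocallyPathConnectedSpace c.cofan₂.pt :=
        locallyPathConnectedSpace_of_isColimit c.isColimit₂
          fun j => ⟨j, ⟨𝟙 j⟩, locallyPathConnectedSpace_disk n⟩
      refine locallyPathConnectedSpace_of_isColimit c.isPushout.isColimit ?_
      -- the attaching spheres map into the previous skeleton, so they add nothing to the topology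
      rintro (_ | (_ | _))
      · exact ⟨WalkingSpan.left, ⟨WalkingSpan.Hom.fst⟩, ih⟩
      · exact ⟨WalkingSpan.left, ⟨𝟙 _⟩, ih⟩
      · exact ⟨WalkingSpan.right, ⟨𝟙 _⟩, this⟩
  exact locallyPathConnectedSpace_of_isColimit K.isColimit fun n => ⟨n, ⟨𝟙 n⟩, hsk n⟩

theorem ContinuousMap.HomotopyEquiv.pathConnectedSpace {X Y : Type*} [TopologicalSpace X]
    [TopologicalSpace Y] [PathConnectedSpace Y] (e : ContinuousMap.HomotopyEquiv X Y) :
    PathConnectedSpace X := by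
  obtain ⟨K⟩ := e.left_inv
  have hret : ∀ x, Joined (e.invFun (e.toFun x)) x := fun x => ⟨K.evalAt x⟩
  exact ⟨⟨e.invFun (Classical.arbitrary Y)⟩, fun x y =>
    ((hret x).symm.trans ((PathConnectedSpace.joined _ _).map e.invFun.continuous)).trans
      (hret y)⟩

section TopologicalLattice

variable {L : Type*} [TopologicalSpace L]

theorem OrderClosedTopology.of_continuousInf [SemilatticeInf L] [ContinuousInf L] [T2Space L] :
    OrderClosedTopology L where
  isClosed_le' := by
    simp only [← inf_eq_left (α := L)]
    exact isClosed_eq continuous_inf continuous_fst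

theorem InfClosed.closure [SemilatticeInf L] [ContinuousInf L] {s : Set L} (hs : InfClosed s) :
    InfClosed (closure s) := fun _ ha _ hb =>
  map_mem_closure₂ continuous_inf ha hb fun _ ha' _ hb' => hs ha' hb'

theorem Filter.HasBasis.isClosed_infClosed [SemilatticeInf L] [ContinuousInf L] [RegularSpace L]
    {x : L} (h : (𝓝 x).HasBasis (fun s => s ∈ 𝓝 x ∧ InfClosed s) id) :
    (𝓝 x).HasBasis (fun s => s ∈ 𝓝 x ∧ IsClosed s ∧ InfClosed s) id := by
  refine ⟨fun V => ⟨fun hV => ?_, fun ⟨W, hW, hWV⟩ => mem_of_superset hW.1 hWV⟩⟩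
  obtain ⟨K, ⟨hK, hKc⟩, hKV⟩ := (closed_nhds_basis x).mem_iff.1 hV
  obtain ⟨S, ⟨hS, hSinf⟩, hSK⟩ := h.mem_iff.1 hK
  exact ⟨closure S, ⟨mem_of_superset hS subset_closure, isClosed_closure, hSinf.closure⟩,
    (hKc.closure_subset_iff.2 hSK).trans hKV⟩

variable [CompactSpace L]

theorem IsGLB.tendsto_of_eventually_le [PartialOrder L] [OrderClosedTopology L] {ι : Type*}
    {l : Filter ι} {f : ι → L} {s : Set L} {a : L} (ha : IsGLB s a) (hle : ∀ᶠ i in l, a ≤ f i)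
    (hge : ∀ b ∈ s, ∀ᶠ i in l, f i ≤ b) : Tendsto f l (𝓝 a) := by
  refine tendsto_nhds_of_unique_mapClusterPt fun z hz => le_antisymm (ha.2 fun b hb => ?_) ?_
  · exact isClosed_Iic.mem_of_mapClusterPt hz (hge b hb)
  · exact isClosed_Ici.mem_of_mapClusterPt hz hle

theorem InfClosed.sInf_mem_of_isClosed [CompleteLattice L] [OrderClosedTopology L] {W S : Set L}
    (hW : InfClosed W) (hWc : IsClosed W) (hS : S.Nonempty) (hSW : S ⊆ W) : sInf S ∈ W := by
  classical
  obtain ⟨s₀, hs₀⟩ := hS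
  let f : Finset S → L := fun t => (insert ⟨s₀, hs₀⟩ t).inf Subtype.val
  have hf : Tendsto f atTop (𝓝 (sInf S)) := by
    refine (isGLB_sInf S).tendsto_of_eventually_le
      (.of_forall fun t => Finset.le_inf fun b _ => sInf_le b.2) fun b hb => ?_
    filter_upwards [eventually_ge_atTop {⟨b, hb⟩}] with t ht
    exact Finset.inf_le (Finset.mem_insert_of_mem (ht (Finset.mem_singleton_self _)))
  exact hWc.mem_of_tendsto hf (.of_forall fun t =>
    hW.finsetInf_mem (Finset.insert_nonempty _ _) fun b _ => hSW b.2)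

end TopologicalLattice

section RunningInf

variable {α L : Type*} [LinearOrder α] [CompleteLattice L]

def runningInf (q : α → L) (t : α) : L :=
  sInf (q '' Iic t)

variable (q : α → L) {s t : α}

theorem runningInf_antitone : Antitone (runningInf q) := fun _ _ h =>
  sInf_le_sInf (image_mono (Iic_subset_Iic.2 h))

theorem runningInf_le : runningInf q t ≤ q t :=
  sInf_le (mem_image_of_mem q (mem_Iic.2 le_rfl))

theorem IsMin.runningInf_eq (ht : IsMin t) : runningInf q t = q t := by
  rw [runningInf, ht.Iic_eq, image_singleton, sInf_singleton]

theorem runningInf_eq_inf_sInf_Icc (h : s ≤ t) :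
    runningInf q t = runningInf q s ⊓ sInf (q '' Icc s t) := by
  rw [runningInf, ← Iic_union_Icc_eq_Iic h, image_union, sInf_union, runningInf]

variable [TopologicalSpace α] [OrderTopology α] [TopologicalSpace L] {q}

theorem isGLB_image_Iio_runningInf [DenselyOrdered α] [ClosedIciTopology L] (hq : Continuous q)
    (ht : (Iio t).Nonempty) : IsGLB (q '' Iio t) (runningInf q t) := by
  refine (isGLB_iff_of_subset_of_subset_closure (image_mono Iio_subset_Iic_self) ?_).2
    (isGLB_sInf _)
  rw [← closure_Iio' ht]
  exact image_closure_subset_closure_image hq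

variable [CompactSpace L] [OrderClosedTopology L]

theorem tendsto_runningInf_nhdsLT [DenselyOrdered α] (hq : Continuous q) :
    Tendsto (runningInf q) (𝓝[<] t) (𝓝 (runningInf q t)) := by
  rcases (Iio t).eq_empty_or_nonempty with ht | ht
  · rw [ht, nhdsWithin_empty]
    exact tendsto_bot
  refine (isGLB_image_Iio_runningInf hq ht).tendsto_of_eventually_le
    (eventually_mem_nhdsWithin.mono fun _ hs => runningInf_antitone q hs.le) ?_
  rintro _ ⟨u, hu, rfl⟩
  filter_upwards [Ioo_mem_nhdsLT hu] with s hs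
  exact (runningInf_antitone q hs.1.le).trans (runningInf_le q)

theorem tendsto_sInf_image_Icc (hq : Continuous q)
    (h : (𝓝 (q t)).HasBasis (fun s => s ∈ 𝓝 (q t) ∧ IsClosed s ∧ InfClosed s) id) :
    Tendsto (fun s => sInf (q '' Icc t s)) (𝓝[≥] t) (𝓝 (q t)) := by
  refine h.tendsto_right_iff.2 fun W ⟨hW, hWc, hWinf⟩ => ?_
  have hIcc := (tendsto_smallSets_iff.1 (tendsto_const_nhds.Icc tendsto_id)) _
    (hq.continuousAt.preimage_mem_nhds hW)
  filter_upwards [nhdsWithin_le_nhds hIcc, self_mem_nhdsWithin] with s hsW hts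
  exact hWinf.sInf_mem_of_isClosed hWc (nonempty_Icc.2 hts |>.image q)
    (image_subset_iff.2 hsW)

theorem tendsto_runningInf_nhdsGE [ContinuousInf L] (hq : Continuous q)
    (h : (𝓝 (q t)).HasBasis (fun s => s ∈ 𝓝 (q t) ∧ IsClosed s ∧ InfClosed s) id) :
    Tendsto (runningInf q) (𝓝[≥] t) (𝓝 (runningInf q t)) := by
  have hlim := (tendsto_const_nhds (x := runningInf q t)).inf_nhds (tendsto_sInf_image_Icc hq h)
  rw [inf_eq_left.2 (runningInf_le q)] at hlim
  exact hlim.congr' (eventually_mem_nhdsWithin.mono fun s hs =>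
    (runningInf_eq_inf_sInf_Icc q hs).symm)

theorem continuous_runningInf [DenselyOrdered α] [ContinuousInf L] (hq : Continuous q)
    (h : ∀ x : L, (𝓝 x).HasBasis (fun s => s ∈ 𝓝 x ∧ IsClosed s ∧ InfClosed s) id) :
    Continuous (runningInf q) :=
  continuous_iff_continuousAt.2 fun _ =>
    (continuousAt_iff_continuous_left'_right' (f := runningInf q)).2
    ⟨tendsto_runningInf_nhdsLT hq,
      (tendsto_runningInf_nhdsGE hq (h _)).mono_left (nhdsWithin_mono _ Ioi_subset_Ici_self)⟩

end RunningInf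

theorem stmt_13_general {L : Type u} [CompleteLattice L] [TopologicalSpace L]
    [CompactSpace L] [T2Space L]
    (hinf : Continuous fun p : L × L => p.1 ⊓ p.2)
    (hinfBasis : ∀ x : L, (nhds x).HasBasis
      (fun s : Set L => s ∈ nhds x ∧ ∀ a ∈ s, ∀ b ∈ s, a ⊓ b ∈ s) id)
    (hcw : ∃ C : TopCat.{u}, Nonempty (TopCat.CWComplex C) ∧ ConnectedSpace C ∧
      Nonempty (ContinuousMap.HomotopyEquiv L C)) :
    ∃ H : L × I → L, Continuous H ∧
      (∀ (x x' : L) (t t' : I), x ≤ x' → t' ≤ t → H (x, t) ≤ H (x', t')) ∧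
      (∀ x : L, H (x, 0) = x) ∧ (∀ x : L, H (x, 1) = ⊥) := by
  have : ContinuousInf L := ⟨hinf⟩
  have : OrderClosedTopology L := .of_continuousInf
  have : PathConnectedSpace L := by
    obtain ⟨C, ⟨K⟩, hC, ⟨e⟩⟩ := hcw
    have := K.locallyPathConnectedSpace
    have := PathConnectedSpace.of_locallyPathConnectedSpace (X := C)
    exact e.pathConnectedSpace
  let p := runningInf (PathConnectedSpace.somePath (⊤ : L) ⊥)
  have hp : Continuous p :=
    continuous_runningInf (Path.continuous _) fun x => (hinfBasis x).isClosed_infClosed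
  have hp0 : p 0 = ⊤ := (IsMin.runningInf_eq _ fun _ _ => nonneg').trans (Path.source _)
  have hp1 : p 1 = ⊥ := le_bot_iff.1 ((runningInf_le _).trans_eq (Path.target _))
  exact ⟨fun x => x.1 ⊓ p x.2, continuous_fst.inf (hp.comp continuous_snd),
    fun x x' t t' hx ht => inf_le_inf hx (runningInf_antitone _ ht),
    fun x => by simp only [hp0, inf_top_eq], fun x => by simp only [hp1, inf_bot_eq]⟩

/-- A hypercontinuous lattice equipped with its Lawson topology (a complete lattice with
a compact Hausdorff topology for which binary inf and binary sup are jointly continuous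
and every point admits neighborhood bases of sub-semilattices for each operation) is
past contractible if its underlying space is homotopy equivalent to a connected
CW complex: there is a homotopy from the identity to the constant map at `⊥` which is
monotone for the product of the lattice order and the *reverse* order on `[0,1]`. -/
theorem stmt_13 {L : Type u} [CompleteLattice L] [TopologicalSpace L]
    [CompactSpace L] [T2Space L]
    (hinf : Continuous fun p : L × L => p.1 ⊓ p.2)
    (hsup : Continuous fun p : L × L => p.1 ⊔ p.2)
    (hinfBasis : ∀ x : L, (nhds x).HasBasis
      (fun s : Set L => s ∈ nhds x ∧ ∀ a ∈ s, ∀ b ∈ s, a ⊓ b ∈ s) id)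
    (hsupBasis : ∀ x : L, (nhds x).HasBasis
      (fun s : Set L => s ∈ nhds x ∧ ∀ a ∈ s, ∀ b ∈ s, a ⊔ b ∈ s) id)
    (hcw : ∃ C : TopCat.{u}, Nonempty (TopCat.CWComplex C) ∧ ConnectedSpace C ∧
      Nonempty (ContinuousMap.HomotopyEquiv L C)) :
    ∃ H : L × I → L, Continuous H ∧
      (∀ (x x' : L) (t t' : I), x ≤ x' → t' ≤ t → H (x, t) ≤ H (x', t')) ∧
      (∀ x : L, H (x, 0) = x) ∧ (∀ x : L, H (x, 1) = ⊥) :=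
  stmt_13_general hinf hinfBasis hcw
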